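/- For every finite rooted poset X and every si-logic L: X validates L if and only if the Jankov formula 𝒥(X) does not belong to L. -/

import Mathlib

/-- Intuitionistic propositional formulas over variables `p₀, p₁, …`. -/
inductive IForm : Type
  | var : ℕ → IForm
  | bot : IForm
  | and : IForm → IForm → IForm
  | or : IForm → IForm → IForm
  | imp : IForm → IForm → IForm

namespace IForm

/-- Uniform substitution. -/
def subst (σ : ℕ → IForm) : IForm → IForm
  | var n => σ n
  | bot => bot
  | and φ ψ => and (subst σ φ) (subst σ ψ)
  | or φ ψ => or (subst σ φ) (subst σ ψ)
  | imp φ ψ => imp (subst σ φ) (subst σ ψ)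

/-- Biconditional `φ ↔ ψ`. -/
def biimp (φ ψ : IForm) : IForm := and (imp φ ψ) (imp ψ φ)

end IForm

/-- The theorems of the intuitionistic propositional calculus `IPC`, given by a
standard Hilbert-style axiomatization (all axioms are schemes, so `IPC` is
closed under uniform substitution) together with modus ponens. -/
inductive IPC : IForm → Prop
  | ax1 (φ ψ : IForm) : IPC (φ.imp (ψ.imp φ))
  | ax2 (φ ψ χ : IForm) : IPC ((φ.imp (ψ.imp χ)).imp ((φ.imp ψ).imp (φ.imp χ)))
  | andE1 (φ ψ : IForm) : IPC ((φ.and ψ).imp φ)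
  | andE2 (φ ψ : IForm) : IPC ((φ.and ψ).imp ψ)
  | andI (φ ψ : IForm) : IPC (φ.imp (ψ.imp (φ.and ψ)))
  | orI1 (φ ψ : IForm) : IPC (φ.imp (φ.or ψ))
  | orI2 (φ ψ : IForm) : IPC (ψ.imp (φ.or ψ))
  | orE (φ ψ χ : IForm) : IPC ((φ.imp χ).imp ((ψ.imp χ).imp ((φ.or ψ).imp χ)))
  | exfalso (φ : IForm) : IPC (IForm.bot.imp φ)
  | mp (φ ψ : IForm) : IPC (φ.imp ψ) → IPC φ → IPC ψ

/-- A superintuitionistic logic: a set of formulas containing `IPC` and closed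
under modus ponens and uniform substitution. -/
def SuperIntuitionistic (L : Set IForm) : Prop :=
  (∀ φ, IPC φ → φ ∈ L) ∧
  (∀ φ ψ, φ.imp ψ ∈ L → φ ∈ L → ψ ∈ L) ∧
  (∀ φ (σ : ℕ → IForm), φ ∈ L → φ.subst σ ∈ L)
/-- Kripke forcing on a poset, relative to a valuation by upsets. -/
def Forces {X : Type} [Preorder X] (v : ℕ → Set X) : X → IForm → Prop
  | x, .var n => x ∈ v n
  | _, .bot => False
  | x, .and φ ψ => Forces v x φ ∧ Forces v x ψ
  | x, .or φ ψ => Forces v x φ ∨ Forces v x ψ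
  | x, .imp φ ψ => ∀ y, x ≤ y → Forces v y φ → Forces v y ψ

/-- A formula is valid in a poset if it is forced at every point under every
valuation by upsets. -/
def ValidIn (X : Type) [Preorder X] (φ : IForm) : Prop :=
  ∀ v : ℕ → Set X, (∀ n, IsUpperSet (v n)) → ∀ x : X, Forces v x φ

/-- A poset validates a logic if every formula of the logic is valid in it. -/
def ValidLogic (X : Type) [Preorder X] (L : Set IForm) : Prop :=
  ∀ φ ∈ L, ValidIn X φ

/-- `Fin(L) = Fin(L')`: the two logics are validated by the same finite posets. -/
def SameFinPosets (L L' : Set IForm) : Prop :=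
  ∀ (X : Type) [Fintype X] [PartialOrder X], ValidLogic X L ↔ ValidLogic X L'

/-- The fmp span of a logic: the si-logics validated by the same finite posets. -/
def fmpSpan (L : Set IForm) : Set (Set IForm) :=
  {L' | SuperIntuitionistic L' ∧ SameFinPosets L L'}

/-- The degree of the finite model property of a logic. -/
def degFmp (L : Set IForm) : Cardinal :=
  Cardinal.mk (fmpSpan L)
/-- The upsets of a preorder. -/
abbrev Ups (X : Type) [Preorder X] : Type := {U : Set X // IsUpperSet U}

/-- Intersection of upsets. -/
def upsInter {X : Type} [Preorder X] (U V : Ups X) : Ups X := ⟨U.1 ∩ V.1, U.2.inter V.2⟩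

/-- Union of upsets. -/
def upsUnion {X : Type} [Preorder X] (U V : Ups X) : Ups X := ⟨U.1 ∪ V.1, U.2.union V.2⟩

/-- Heyting implication of upsets: `U → V = {x : ↑x ∩ U ⊆ V}`. -/
def upsHimp {X : Type} [Preorder X] (U V : Ups X) : Ups X :=
  ⟨{x | ∀ y, x ≤ y → y ∈ U.1 → y ∈ V.1}, by
    intro a b hab ha y hby hyU
    exact ha y (le_trans hab hby) hyU⟩

/-- The empty upset. -/
def upsEmpty {X : Type} [Preorder X] : Ups X := ⟨∅, isUpperSet_empty⟩

/-- Finite conjunction. -/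
def bigConj : List IForm → IForm
  | [] => IForm.bot.imp IForm.bot
  | φ :: l => φ.and (bigConj l)

/-- The Jankov formula of a finite rooted poset `X` with root `r`: choosing a
distinct variable `p_U` for each upset `U` of `X`, it is `δ → p_s`, where `δ`
is the conjunction of `p_{U∩V} ↔ p_U ∧ p_V`, `p_{U∪V} ↔ p_U ∨ p_V`,
`p_{U→V} ↔ (p_U → p_V)` over all upsets `U, V`, together with `p_∅ ↔ ⊥`, and
`s = X ∖ {r}` is the second largest element of `Up(X)`. -/
noncomputable def jankov (X : Type) [Fintype X] [PartialOrder X] (r : X)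
    (hr : ∀ x, r ≤ x) : IForm :=
  letI : Fintype (Ups X) := Fintype.ofFinite _
  let e : Ups X ≃ Fin (Fintype.card (Ups X)) := Fintype.equivFin (Ups X)
  let p : Ups X → IForm := fun U => IForm.var (e U).val
  let all : List (Ups X) := (List.finRange (Fintype.card (Ups X))).map e.symm
  let triple : Ups X → Ups X → IForm := fun U V =>
    ((p (upsInter U V)).biimp ((p U).and (p V))).and
      (((p (upsUnion U V)).biimp ((p U).or (p V))).and
        ((p (upsHimp U V)).biimp ((p U).imp (p V))))
  let δ : IForm :=
    (bigConj (all.map fun U => bigConj (all.map fun V => triple U V))).and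
      ((p upsEmpty).biimp IForm.bot)
  let s : Ups X := ⟨Set.univ \ {r}, by
    intro a b hab ha
    simp only [Set.mem_diff, Set.mem_univ, Set.mem_singleton_iff, true_and] at ha ⊢
    intro hb
    exact ha (le_antisymm (hb ▸ hab) (hr a))⟩
  δ.imp (p s)

/-- A formula is a Jankov formula if it is the Jankov formula of some finite
rooted poset. -/
def IsJankovFormula (φ : IForm) : Prop :=
  ∃ (X : Type) (i1 : Fintype X) (i2 : PartialOrder X) (r : X)
    (hr : ∀ x : X, i2.le r x), φ = @jankov X i1 i2 r hr

/-! Let `p_U` be the variable of the upset `U` and `δ` the premise of `𝒥(X)`.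
The valuation `p_U ↦ U` forces `δ` everywhere but refutes `p_s` at the root, so
`𝒥(X)` fails on `X`. Conversely, if `φ ∈ L` is refuted on `X` by a valuation `w`,
its truth set `⟦φ⟧_w` misses the root, i.e. `⟦φ⟧_w ⊆ s`. Substituting `p_{w(n)}`
for each variable `pₙ` of `φ` gives `φ'` with `δ ⊢ φ' ↔ p_{⟦φ⟧_w}`, because `δ`
says exactly that `U ↦ p_U` commutes with the Heyting operations; as `δ` also
proves `p_{⟦φ⟧_w} → p_s`, we get `φ' ⊢ δ → p_s`, so `𝒥(X) ∈ L` along with `φ'`. -/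

inductive Derivable : List IForm → IForm → Prop
  | hyp {Γ φ} : φ ∈ Γ → Derivable Γ φ
  | ax {Γ φ} : IPC φ → Derivable Γ φ
  | mp {Γ φ ψ} : Derivable Γ (φ.imp ψ) → Derivable Γ φ → Derivable Γ ψ

namespace Derivable

variable {Γ : List IForm} {φ ψ χ φ' ψ' : IForm}

theorem weaken {Δ : List IForm} (h : Derivable Γ φ) (hΓΔ : Γ ⊆ Δ) : Derivable Δ φ := by
  induction h with
  | hyp h => exact hyp (hΓΔ h)
  | ax h => exact ax h
  | mp _ _ ih₁ ih₂ => exact mp ih₁ ih₂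

theorem cons (h : Derivable Γ φ) : Derivable (ψ :: Γ) φ :=
  h.weaken (List.subset_cons_self _ _)

theorem head : Derivable (φ :: Γ) φ := hyp List.mem_cons_self

theorem imp_self : Derivable Γ (φ.imp φ) :=
  ax (.mp _ _ (.mp _ _ (.ax2 φ (φ.imp φ) φ) (.ax1 ..)) (.ax1 ..))

theorem deduction (h : Derivable (ψ :: Γ) φ) : Derivable Γ (ψ.imp φ) := by
  induction h with
  | hyp h =>
    rcases List.mem_cons.1 h with rfl | h
    · exact imp_self
    · exact mp (ax (.ax1 ..)) (hyp h)
  | ax h => exact mp (ax (.ax1 ..)) (ax h)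
  | mp _ _ ih₁ ih₂ => exact mp (mp (ax (.ax2 ..)) ih₁) ih₂

theorem and_left (h : Derivable Γ (φ.and ψ)) : Derivable Γ φ := mp (ax (.andE1 ..)) h

theorem and_right (h : Derivable Γ (φ.and ψ)) : Derivable Γ ψ := mp (ax (.andE2 ..)) h

theorem and_intro (hφ : Derivable Γ φ) (hψ : Derivable Γ ψ) : Derivable Γ (φ.and ψ) :=
  mp (mp (ax (.andI ..)) hφ) hψ

theorem or_inl (h : Derivable Γ φ) : Derivable Γ (φ.or ψ) := mp (ax (.orI1 ..)) h

theorem or_inr (h : Derivable Γ ψ) : Derivable Γ (φ.or ψ) := mp (ax (.orI2 ..)) h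

theorem or_elim (h : Derivable Γ (φ.or ψ)) (hφ : Derivable (φ :: Γ) χ)
    (hψ : Derivable (ψ :: Γ) χ) : Derivable Γ χ :=
  mp (mp (mp (ax (.orE ..)) (deduction hφ)) (deduction hψ)) h

theorem imp_trans (h₁ : Derivable Γ (φ.imp ψ)) (h₂ : Derivable Γ (ψ.imp χ)) :
    Derivable Γ (φ.imp χ) :=
  deduction (mp h₂.cons (mp h₁.cons head))

theorem biimp_mp (h : Derivable Γ (φ.biimp ψ)) (hφ : Derivable Γ φ) : Derivable Γ ψ :=
  mp h.and_left hφ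

theorem biimp_mpr (h : Derivable Γ (φ.biimp ψ)) (hψ : Derivable Γ ψ) : Derivable Γ φ :=
  mp h.and_right hψ

theorem biimp_refl : Derivable Γ (φ.biimp φ) := and_intro imp_self imp_self

theorem biimp_symm (h : Derivable Γ (φ.biimp ψ)) : Derivable Γ (ψ.biimp φ) :=
  and_intro h.and_right h.and_left

theorem biimp_trans (h₁ : Derivable Γ (φ.biimp ψ)) (h₂ : Derivable Γ (ψ.biimp χ)) :
    Derivable Γ (φ.biimp χ) :=
  and_intro (imp_trans h₁.and_left h₂.and_left) (imp_trans h₂.and_right h₁.and_right)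

theorem and_congr (hφ : Derivable Γ (φ.biimp φ')) (hψ : Derivable Γ (ψ.biimp ψ')) :
    Derivable Γ ((φ.and ψ).biimp (φ'.and ψ')) :=
  and_intro
    (deduction (and_intro (hφ.cons.biimp_mp head.and_left) (hψ.cons.biimp_mp head.and_right)))
    (deduction (and_intro (hφ.cons.biimp_mpr head.and_left) (hψ.cons.biimp_mpr head.and_right)))

theorem or_congr (hφ : Derivable Γ (φ.biimp φ')) (hψ : Derivable Γ (ψ.biimp ψ')) :
    Derivable Γ ((φ.or ψ).biimp (φ'.or ψ')) :=
  and_intro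
    (deduction (or_elim head (or_inl (hφ.cons.cons.biimp_mp head))
      (or_inr (hψ.cons.cons.biimp_mp head))))
    (deduction (or_elim head (or_inl (hφ.cons.cons.biimp_mpr head))
      (or_inr (hψ.cons.cons.biimp_mpr head))))

theorem imp_congr (hφ : Derivable Γ (φ.biimp φ')) (hψ : Derivable Γ (ψ.biimp ψ')) :
    Derivable Γ ((φ.imp ψ).biimp (φ'.imp ψ')) :=
  and_intro
    (deduction (deduction (hψ.cons.cons.biimp_mp (mp head.cons (hφ.cons.cons.biimp_mpr head)))))
    (deduction (deduction (hψ.cons.cons.biimp_mpr (mp head.cons (hφ.cons.cons.biimp_mp head)))))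

theorem of_bigConj {l : List IForm} (h : Derivable Γ (bigConj l)) (hφ : φ ∈ l) :
    Derivable Γ φ := by
  induction l with
  | nil => simp at hφ
  | cons ψ l ih =>
    rcases List.mem_cons.1 hφ with rfl | hφ
    · exact h.and_left
    · exact ih h.and_right hφ

end Derivable

theorem SuperIntuitionistic.mem_of_derivable {L : Set IForm} (hL : SuperIntuitionistic L)
    {Γ : List IForm} {φ : IForm} (hΓ : ∀ ψ ∈ Γ, ψ ∈ L) (h : Derivable Γ φ) : φ ∈ L := by
  induction h with
  | hyp h => exact hΓ _ h
  | ax h => exact hL.1 _ h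
  | mp _ _ ih₁ ih₂ => exact hL.2.1 _ _ ih₁ ih₂

section Semantics

variable {X : Type} [Preorder X]

/-- The truth set of a formula in the Heyting algebra of upsets. -/
def sem (w : ℕ → Ups X) : IForm → Ups X
  | .var n => w n
  | .bot => upsEmpty
  | .and φ ψ => upsInter (sem w φ) (sem w ψ)
  | .or φ ψ => upsUnion (sem w φ) (sem w ψ)
  | .imp φ ψ => upsHimp (sem w φ) (sem w ψ)

theorem forces_iff_mem_sem (v : ℕ → Set X) (hv : ∀ n, IsUpperSet (v n)) (φ : IForm)
    (x : X) : Forces v x φ ↔ x ∈ (sem (fun n => ⟨v n, hv n⟩) φ).1 := by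
  induction φ generalizing x with
  | var n => rfl
  | bot => simp [Forces, sem, upsEmpty]
  | and φ ψ ihφ ihψ => simp [Forces, sem, upsInter, ihφ, ihψ]
  | or φ ψ ihφ ihψ => simp [Forces, sem, upsUnion, ihφ, ihψ]
  | imp φ ψ ihφ ihψ => simp [Forces, sem, upsHimp, ihφ, ihψ]

theorem forces_bigConj {v : ℕ → Set X} {x : X} {l : List IForm} :
    Forces v x (bigConj l) ↔ ∀ φ ∈ l, Forces v x φ := by
  induction l with
  | nil => simp [bigConj, Forces]
  | cons φ l ih => simp [bigConj, Forces, ih]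

theorem forces_biimp {v : ℕ → Set X} {x : X} {φ ψ : IForm}
    (h : ∀ y, Forces v y φ ↔ Forces v y ψ) : Forces v x (φ.biimp ψ) :=
  ⟨fun y _ => (h y).1, fun y _ => (h y).2⟩

end Semantics

section JankovPremise

variable {X : Type} [Preorder X] {N : ℕ} (e : Ups X ≃ Fin N)

/-- The variable `p_U` of the upset `U`. -/
def upsVar (U : Ups X) : IForm := .var (e U).val

def jankovTriple (U V : Ups X) : IForm :=
  ((upsVar e (upsInter U V)).biimp ((upsVar e U).and (upsVar e V))).and
    (((upsVar e (upsUnion U V)).biimp ((upsVar e U).or (upsVar e V))).and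
      ((upsVar e (upsHimp U V)).biimp ((upsVar e U).imp (upsVar e V))))

/-- The premise `δ` of the Jankov formula. -/
def jankovPremise : IForm :=
  let all := (List.finRange N).map e.symm
  (bigConj (all.map fun U => bigConj (all.map fun V => jankovTriple e U V))).and
    ((upsVar e upsEmpty).biimp .bot)

/-- The valuation `p_U ↦ U`. -/
def upsValuation (n : ℕ) : Set X := if h : n < N then (e.symm ⟨n, h⟩).1 else ∅

theorem isUpperSet_upsValuation (n : ℕ) : IsUpperSet (upsValuation e n) := by
  unfold upsValuation
  split
  exacts [(e.symm _).2, isUpperSet_empty]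

theorem forces_upsVar {x : X} {U : Ups X} :
    Forces (upsValuation e) x (upsVar e U) ↔ x ∈ U.1 := by
  simp [upsVar, upsValuation, Forces]

theorem forces_jankovPremise (x : X) : Forces (upsValuation e) x (jankovPremise e) := by
  refine ⟨forces_bigConj.2 ?_, forces_biimp fun y => by simp [forces_upsVar, upsEmpty, Forces]⟩
  simp only [List.forall_mem_map]
  intro U _
  refine forces_bigConj.2 ?_
  simp only [List.forall_mem_map]
  intro V _
  refine ⟨forces_biimp ?_, forces_biimp ?_, forces_biimp ?_⟩ <;>
    simp [forces_upsVar, upsInter, upsUnion, upsHimp, Forces]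

variable {e} {Γ : List IForm}

theorem Derivable.jankovTriple (hδ : Derivable Γ (jankovPremise e)) (U V : Ups X) :
    Derivable Γ (jankovTriple e U V) := by
  have hmem : ∀ U : Ups X, U ∈ (List.finRange N).map e.symm := fun U =>
    List.mem_map.2 ⟨e U, List.mem_finRange _, e.symm_apply_apply U⟩
  exact (hδ.and_left.of_bigConj (List.mem_map_of_mem (hmem U))).of_bigConj
    (List.mem_map_of_mem (hmem V))

theorem Derivable.upsVar_imp_of_subset (hδ : Derivable Γ (jankovPremise e)) {U V : Ups X}
    (hUV : U.1 ⊆ V.1) : Derivable Γ ((upsVar e U).imp (upsVar e V)) := by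
  have hinter : upsInter U V = U := Subtype.ext (Set.inter_eq_left.2 hUV)
  have h := (hδ.jankovTriple U V).and_left
  rw [hinter] at h
  exact deduction (h.cons.biimp_mp head).and_right

theorem Derivable.subst_biimp_upsVar_sem (hδ : Derivable Γ (jankovPremise e))
    (w : ℕ → Ups X) (φ : IForm) :
    Derivable Γ ((φ.subst (upsVar e ∘ w)).biimp (upsVar e (sem w φ))) := by
  induction φ with
  | var n => exact biimp_refl
  | bot => exact biimp_symm hδ.and_right
  | and φ ψ ihφ ihψ =>
    exact (and_congr ihφ ihψ).biimp_trans (hδ.jankovTriple _ _).and_left.biimp_symm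
  | or φ ψ ihφ ihψ =>
    exact (or_congr ihφ ihψ).biimp_trans (hδ.jankovTriple _ _).and_right.and_left.biimp_symm
  | imp φ ψ ihφ ihψ =>
    exact (imp_congr ihφ ihψ).biimp_trans (hδ.jankovTriple _ _).and_right.and_right.biimp_symm

end JankovPremise

section Jankov

variable {X : Type} [PartialOrder X] {r : X}

/-- The second largest upset `s = X ∖ {r}`. -/
def rootCompl (hr : ∀ x, r ≤ x) : Ups X :=
  ⟨Set.univ \ {r}, fun a _ hab ha =>
    ⟨trivial, fun hb => ha.2 (le_antisymm (hb ▸ hab) (hr a))⟩⟩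

theorem jankov_eq_imp [Fintype X] (hr : ∀ x, r ≤ x) :
    ∃ (N : ℕ) (e : Ups X ≃ Fin N),
      jankov X r hr = (jankovPremise e).imp (upsVar e (rootCompl hr)) :=
  letI : Fintype (Ups X) := Fintype.ofFinite _
  ⟨_, Fintype.equivFin (Ups X), rfl⟩

theorem not_validIn_jankov [Fintype X] (hr : ∀ x, r ≤ x) : ¬ ValidIn X (jankov X r hr) := by
  obtain ⟨N, e, hJe⟩ := jankov_eq_imp hr
  intro hJ
  rw [hJe] at hJ
  have hs := hJ _ (isUpperSet_upsValuation e) r r le_rfl (forces_jankovPremise e r)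
  exact ((forces_upsVar e).1 hs).2 rfl

theorem jankov_mem_of_not_validIn [Fintype X] (hr : ∀ x, r ≤ x) {L : Set IForm}
    (hL : SuperIntuitionistic L) {φ : IForm} (hφL : φ ∈ L) (hφ : ¬ ValidIn X φ) :
    jankov X r hr ∈ L := by
  obtain ⟨v, hv, x, hx⟩ :
      ∃ v : ℕ → Set X, ∃ hv : ∀ n, IsUpperSet (v n), ∃ x, ¬ Forces v x φ := by
    simpa [ValidIn] using hφ
  obtain ⟨N, e, hJe⟩ := jankov_eq_imp hr
  set w : ℕ → Ups X := fun n => ⟨v n, hv n⟩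
  set φ' := φ.subst (upsVar e ∘ w)
  have hroot : r ∉ (sem w φ).1 := fun h =>
    hx ((forces_iff_mem_sem v hv φ x).2 ((sem w φ).2 (hr x) h))
  have hsub : (sem w φ).1 ⊆ (rootCompl hr).1 := fun y hy =>
    ⟨trivial, fun hyr => hroot (hyr ▸ hy)⟩
  have hδ : Derivable [jankovPremise e, φ'] (jankovPremise e) := .head
  have hJ : Derivable [φ'] ((jankovPremise e).imp (upsVar e (rootCompl hr))) :=
    .deduction (.mp (hδ.upsVar_imp_of_subset hsub)
      ((hδ.subst_biimp_upsVar_sem w φ).biimp_mp Derivable.head.cons))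
  rw [hJe]
  exact hL.mem_of_derivable (by simpa using hL.2.2 φ _ hφL) hJ

end Jankov

/-- **Theorem.** For every finite rooted poset `X` and every si-logic `L`:
`X` validates `L` iff the Jankov formula `𝒥(X)` does not belong to `L`. -/
theorem validLogic_iff_jankov_notMem (X : Type) [Fintype X] [PartialOrder X]
    (r : X) (hr : ∀ x, r ≤ x) (L : Set IForm) (hL : SuperIntuitionistic L) :
    ValidLogic X L ↔ jankov X r hr ∉ L :=
  ⟨fun hX hJ => not_validIn_jankov hr (hX _ hJ),
    fun hJ _ hφ => by_contra fun h => hJ (jankov_mem_of_not_validIn hr hL hφ h)⟩
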